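/- Fix n ≥ 1 and k ∈ Fin(n+1). The assignment ξ ↦ K₀(ξ), φ ↦ K₁(φ) is functorial on monotone maps over Fin(n+1): (i) if φ is the identity of Fin(m+1) (so ξ' = ξ), then K₁(φ) is the identity of Fin(m+1+‖ξ‖); (ii) if ψ : Fin(m+1) → Fin(m'+1) and φ : Fin(m'+1) → Fin(m''+1) are monotone with ξ' ∘ ψ = ξ and ξ'' ∘ φ = ξ', then K₁(φ ∘ ψ) = K₁(φ) ∘ K₁(ψ). -/

import Mathlib

/-! The images of `λ(ξ)` and `κ(ξ)` together cover `Fin (m+1+‖ξ‖)`, so a map out of it is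
determined by its composites with `λ(ξ)` and `κ(ξ)`. The identity and `K₁(φ) ∘ K₁(ψ)` satisfy
the equations characterising `K₁(id)` and `K₁(φ ∘ ψ)`, because `φ ↦ ∏_{j ≠ k} φ_j` is itself
functorial. -/

open CategoryTheory Simplicial CategoryTheory.GrothendieckTopology

universe u

section Xi

variable {n m : ℕ} (k : Fin (n + 1)) (ξ : Fin (m + 1) →o Fin (n + 1))

/-- The fiber `ξ_j = {i : ξ i = j}` of `ξ` over `j : Fin (n+1)`, ordered as a subset
of `Fin (m+1)`. -/
abbrev xiFiber (j : Fin (n + 1)) : Type := { i : Fin (m + 1) // ξ i = j }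

/-- The product `∏_{j ≠ k} ξ_j` of the fibers of `ξ` away from `k`, equipped with the
lexicographic order. -/
abbrev xiProd : Type := Lex (∀ j : { j : Fin (n + 1) // j ≠ k }, xiFiber ξ j.1)

/-- The lexicographic linear order on `∏_{j ≠ k} ξ_j`. -/
noncomputable instance : LinearOrder (xiProd k ξ) :=
  @Pi.Lex.linearOrder { j : Fin (n + 1) // j ≠ k }
    (fun j => xiFiber ξ j.1) _ Finite.to_wellFoundedLT _

instance : Fintype (xiProd k ξ) :=
  inferInstanceAs (Fintype (∀ j : { j : Fin (n + 1) // j ≠ k }, xiFiber ξ j.1))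

/-- `‖ξ‖`, the number of elements of the product `∏_{j ≠ k} ξ_j`. -/
noncomputable def xiNorm : ℕ := Fintype.card (xiProd k ξ)

/-- The number of `i` with `ξ i < k`; this is the least index `i` with
`K₀(ξ)(i) = k`, i.e. the start of the interval complementary to the image of `λ(ξ)`. -/
noncomputable def xiStart : ℕ := Fintype.card { i : Fin (m + 1) // ξ i < k }

lemma xiStart_le : xiStart k ξ ≤ m + 1 := by
  simpa [xiStart] using Fintype.card_subtype_le (fun i : Fin (m + 1) => ξ i < k)

/-- `K₀(ξ) : Fin (m+1+‖ξ‖) → Fin (n+1)`, defined by `K₀(ξ)(i) = ξ(i)` if `i ≤ m` and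
`ξ(i) < k`; `K₀(ξ)(i) = ξ(i-‖ξ‖)` if `i ≥ ‖ξ‖` and `ξ(i-‖ξ‖) > k`; and `K₀(ξ)(i) = k`
otherwise. -/
noncomputable def K0 (i : Fin (m + xiNorm k ξ + 1)) : Fin (n + 1) :=
  if h : i.1 ≤ m ∧ ξ ⟨min i.1 m, by omega⟩ < k then ξ ⟨min i.1 m, by omega⟩
  else if h' : xiNorm k ξ ≤ i.1 ∧ k < ξ ⟨i.1 - xiNorm k ξ, by have := i.isLt; omega⟩ then
    ξ ⟨i.1 - xiNorm k ξ, by have := i.isLt; omega⟩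
  else k

/-- `λ(ξ) : Fin (m+1) → Fin (m+1+‖ξ‖)`: `λ(ξ)(i) = i` if `ξ i < k` and
`λ(ξ)(i) = i + ‖ξ‖` if `ξ i ≥ k`. -/
noncomputable def lam (i : Fin (m + 1)) : Fin (m + xiNorm k ξ + 1) :=
  if ξ i < k then ⟨i.1, by omega⟩ else ⟨i.1 + xiNorm k ξ, by omega⟩

/-- The enumeration of the lexicographically ordered product `∏_{j ≠ k} ξ_j` by
`Fin ‖ξ‖`. -/
noncomputable def xiLexIso : Fin (xiNorm k ξ) ≃o xiProd k ξ :=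
  Fintype.orderIsoFinOfCardEq _ rfl

/-- `κ(ξ)`: the order-preserving injection sending the lexicographic product
`∏_{j ≠ k} ξ_j` onto the interval of length `‖ξ‖` in `Fin (m+1+‖ξ‖)` starting at the
least index `i` with `K₀(ξ)(i) = k` (the complement of the image of `λ(ξ)`). -/
noncomputable def kappa (x : xiProd k ξ) : Fin (m + xiNorm k ξ + 1) :=
  ⟨xiStart k ξ + ((xiLexIso k ξ).symm x).1, by
    have h1 := xiStart_le k ξ
    have h2 := ((xiLexIso k ξ).symm x).2
    omega⟩

end Xi

/-- The product map `∏_{j ≠ k} φ_j : ∏_{j ≠ k} ξ_j → ∏_{j ≠ k} ξ'_j` induced on fibers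
by a monotone map `φ` satisfying `ξ' ∘ φ = ξ`. -/
def prodMap {n m m' : ℕ} (k : Fin (n + 1)) (ξ : Fin (m + 1) →o Fin (n + 1))
    (ξ' : Fin (m' + 1) →o Fin (n + 1)) (φ : Fin (m + 1) →o Fin (m' + 1))
    (hφ : ∀ i, ξ' (φ i) = ξ i) (x : xiProd k ξ) : xiProd k ξ' :=
  toLex fun j => ⟨φ ((ofLex x) j).1, by rw [hφ]; exact ((ofLex x) j).2⟩

theorem Fin.val_lt_card_subtype_iff {N : ℕ} {p : Fin N → Prop} [DecidablePred p]
    (hp : ∀ ⦃i j⦄, i ≤ j → p j → p i) (i : Fin N) :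
    i.1 < Fintype.card { j // p j } ↔ p i := by
  rw [Fintype.card_subtype p]
  constructor
  · intro hlt
    by_contra hi
    have hsub : Finset.univ.filter p ⊆ Finset.Iio i := fun j hj => by
      rw [Finset.mem_filter] at hj
      exact Finset.mem_Iio.2 (lt_of_not_ge fun hij => hi (hp hij hj.2))
    have := Finset.card_le_card hsub
    rw [Fin.card_Iio] at this
    exact (hlt.trans_le this).false
  · intro hi
    have hsub : Finset.Iic i ⊆ Finset.univ.filter p := fun j hj => by
      simpa using hp (Finset.mem_Iic.1 hj) hi
    have := Finset.card_le_card hsub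
    rw [Fin.card_Iic] at this
    exact this

section Cover

variable {n m : ℕ} (k : Fin (n + 1)) (ξ : Fin (m + 1) →o Fin (n + 1))

theorem lt_xiStart_iff (i : Fin (m + 1)) : i.1 < xiStart k ξ ↔ ξ i < k :=
  Fin.val_lt_card_subtype_iff (fun _ _ hij hj => (ξ.monotone hij).trans_lt hj) i

/-- `λ(ξ)` fills `[0, xiStart)` and `[xiStart + ‖ξ‖, m + ‖ξ‖]`, and `κ(ξ)` the gap between. -/
theorem exists_eq_lam_or_exists_eq_kappa (y : Fin (m + xiNorm k ξ + 1)) :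
    (∃ i, y = lam k ξ i) ∨ ∃ x, y = kappa k ξ x := by
  have hs := xiStart_le k ξ
  have hy := y.isLt
  by_cases hlow : y.1 < xiStart k ξ
  · have hk : ξ ⟨y.1, by omega⟩ < k := (lt_xiStart_iff k ξ _).1 hlow
    exact .inl ⟨⟨y.1, by omega⟩, by simp [lam, hk]⟩
  by_cases hmid : y.1 < xiStart k ξ + xiNorm k ξ
  · refine .inr ⟨xiLexIso k ξ ⟨y.1 - xiStart k ξ, by omega⟩, Fin.ext ?_⟩
    simp only [kappa, OrderIso.symm_apply_apply]
    omega
  · have hk : ¬ ξ ⟨y.1 - xiNorm k ξ, by omega⟩ < k := by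
      rw [← lt_xiStart_iff]
      simp only
      omega
    refine .inl ⟨⟨y.1 - xiNorm k ξ, by omega⟩, Fin.ext ?_⟩
    simp only [lam, hk, if_false]
    omega

theorem ext_lam_kappa {α : Sort*} {f g : Fin (m + xiNorm k ξ + 1) → α}
    (hlam : ∀ i, f (lam k ξ i) = g (lam k ξ i))
    (hkappa : ∀ x, f (kappa k ξ x) = g (kappa k ξ x)) : f = g := by
  funext y
  rcases exists_eq_lam_or_exists_eq_kappa k ξ y with ⟨i, rfl⟩ | ⟨x, rfl⟩
  exacts [hlam i, hkappa x]

end Cover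

section ProdMap

variable {n m m' m'' : ℕ} (k : Fin (n + 1)) (ξ : Fin (m + 1) →o Fin (n + 1))
  (ξ' : Fin (m' + 1) →o Fin (n + 1)) (ξ'' : Fin (m'' + 1) →o Fin (n + 1))

theorem prodMap_id : prodMap k ξ ξ OrderHom.id (fun _ => rfl) = id :=
  rfl

theorem prodMap_comp (ψ : Fin (m + 1) →o Fin (m' + 1)) (φ : Fin (m' + 1) →o Fin (m'' + 1))
    (hψ : ∀ i, ξ' (ψ i) = ξ i) (hφ : ∀ i, ξ'' (φ i) = ξ' i) (x : xiProd k ξ) :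
    prodMap k ξ ξ'' (φ.comp ψ) (fun i => (hφ (ψ i)).trans (hψ i)) x =
      prodMap k ξ' ξ'' φ hφ (prodMap k ξ ξ' ψ hψ x) :=
  rfl

end ProdMap

theorem K1_functorial_general (n : ℕ) (k : Fin (n + 1)) :
    (∀ (m : ℕ) (ξ : Fin (m + 1) →o Fin (n + 1))
        (K1 : Fin (m + xiNorm k ξ + 1) →o Fin (m + xiNorm k ξ + 1)),
      ((∀ x : xiProd k ξ,
          K1 (kappa k ξ x) = kappa k ξ (prodMap k ξ ξ OrderHom.id (fun _ => rfl) x)) ∧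
        (∀ i, K1 (lam k ξ i) = lam k ξ i)) →
      ∀ y, K1 y = y) ∧
    (∀ (m m' m'' : ℕ) (ξ : Fin (m + 1) →o Fin (n + 1))
        (ξ' : Fin (m' + 1) →o Fin (n + 1)) (ξ'' : Fin (m'' + 1) →o Fin (n + 1))
        (ψ : Fin (m + 1) →o Fin (m' + 1)) (φ : Fin (m' + 1) →o Fin (m'' + 1))
        (hψ : ∀ i, ξ' (ψ i) = ξ i) (hφ : ∀ i, ξ'' (φ i) = ξ' i)
        (Kψ : Fin (m + xiNorm k ξ + 1) →o Fin (m' + xiNorm k ξ' + 1))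
        (Kφ : Fin (m' + xiNorm k ξ' + 1) →o Fin (m'' + xiNorm k ξ'' + 1))
        (Kc : Fin (m + xiNorm k ξ + 1) →o Fin (m'' + xiNorm k ξ'' + 1)),
      ((∀ x : xiProd k ξ, Kψ (kappa k ξ x) = kappa k ξ' (prodMap k ξ ξ' ψ hψ x)) ∧
        (∀ i, Kψ (lam k ξ i) = lam k ξ' (ψ i))) →
      ((∀ x : xiProd k ξ', Kφ (kappa k ξ' x) = kappa k ξ'' (prodMap k ξ' ξ'' φ hφ x)) ∧
        (∀ i, Kφ (lam k ξ' i) = lam k ξ'' (φ i))) →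
      ((∀ x : xiProd k ξ, Kc (kappa k ξ x) =
          kappa k ξ'' (prodMap k ξ ξ'' (φ.comp ψ) (fun i => (hφ (ψ i)).trans (hψ i)) x)) ∧
        (∀ i, Kc (lam k ξ i) = lam k ξ'' (φ (ψ i)))) →
      ∀ y, Kc y = Kφ (Kψ y)) := by
  constructor
  · rintro m ξ K1 ⟨hkappa, hlam⟩
    refine congrFun (ext_lam_kappa k ξ (f := K1) (g := id) hlam fun x => ?_)
    rw [hkappa, prodMap_id, id, id]
  · rintro m m' m'' ξ ξ' ξ'' ψ φ hψ hφ Kψ Kφ Kc ⟨hkappaψ, hlamψ⟩ ⟨hkappaφ, hlamφ⟩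
      ⟨hkappac, hlamc⟩
    refine congrFun (ext_lam_kappa k ξ (f := Kc) (g := Kφ ∘ Kψ) (fun i => ?_) fun x => ?_)
    · simp only [Function.comp_apply, hlamc, hlamψ, hlamφ]
    · rw [Function.comp_apply, hkappac, hkappaψ, hkappaφ, prodMap_comp]

/-- Functoriality of `K₀`, `K₁`: the (unique monotone) map `K₁` associated to the
identity is the identity, and `K₁(φ ∘ ψ) = K₁(φ) ∘ K₁(ψ)`. Here `K₁` of a map is
characterized by the equations `K₁ ∘ κ = κ ∘ ∏_{j ≠ k} φ_j` and `K₁ ∘ λ = λ ∘ φ`. -/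
theorem K1_functorial (n : ℕ) (hn : 1 ≤ n) (k : Fin (n + 1)) :
    (∀ (m : ℕ) (ξ : Fin (m + 1) →o Fin (n + 1))
        (K1 : Fin (m + xiNorm k ξ + 1) →o Fin (m + xiNorm k ξ + 1)),
      ((∀ x : xiProd k ξ,
          K1 (kappa k ξ x) = kappa k ξ (prodMap k ξ ξ OrderHom.id (fun _ => rfl) x)) ∧
        (∀ i, K1 (lam k ξ i) = lam k ξ i)) →
      ∀ y, K1 y = y) ∧
    (∀ (m m' m'' : ℕ) (ξ : Fin (m + 1) →o Fin (n + 1))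
        (ξ' : Fin (m' + 1) →o Fin (n + 1)) (ξ'' : Fin (m'' + 1) →o Fin (n + 1))
        (ψ : Fin (m + 1) →o Fin (m' + 1)) (φ : Fin (m' + 1) →o Fin (m'' + 1))
        (hψ : ∀ i, ξ' (ψ i) = ξ i) (hφ : ∀ i, ξ'' (φ i) = ξ' i)
        (Kψ : Fin (m + xiNorm k ξ + 1) →o Fin (m' + xiNorm k ξ' + 1))
        (Kφ : Fin (m' + xiNorm k ξ' + 1) →o Fin (m'' + xiNorm k ξ'' + 1))
        (Kc : Fin (m + xiNorm k ξ + 1) →o Fin (m'' + xiNorm k ξ'' + 1)),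
      ((∀ x : xiProd k ξ, Kψ (kappa k ξ x) = kappa k ξ' (prodMap k ξ ξ' ψ hψ x)) ∧
        (∀ i, Kψ (lam k ξ i) = lam k ξ' (ψ i))) →
      ((∀ x : xiProd k ξ', Kφ (kappa k ξ' x) = kappa k ξ'' (prodMap k ξ' ξ'' φ hφ x)) ∧
        (∀ i, Kφ (lam k ξ' i) = lam k ξ'' (φ i))) →
      ((∀ x : xiProd k ξ, Kc (kappa k ξ x) =
          kappa k ξ'' (prodMap k ξ ξ'' (φ.comp ψ) (fun i => (hφ (ψ i)).trans (hψ i)) x)) ∧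
        (∀ i, Kc (lam k ξ i) = lam k ξ'' (φ (ψ i)))) →
      ∀ y, Kc y = Kφ (Kψ y)) :=
  K1_functorial_general n k
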